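/- (Weak ISS small-gain theorem) Let Σᵢ=(Xᵢ,PC([0,∞),X_{≠i})×𝒰,φ̄ᵢ), i=1,…,n, be forward complete control systems, each weakly ISS with the same gain matrix Γ=(γᵢⱼ) (γᵢⱼ∈K∪{0}, γᵢᵢ=0) for both the UGS and AG properties; that is, each Σᵢ satisfies the UGS estimate in summation formulation ‖φ̄ᵢ(t,xᵢ,(w_{≠i},u))‖_{Xᵢ} ≤ σᵢ(‖xᵢ‖_{Xᵢ}) + Σ_{j≠i}γᵢⱼ(‖wⱼ‖_{[0,t]}) + γᵢ(‖u‖_𝒰) with σᵢ∈K∞, and the AG estimate: for all xᵢ, u, w_{≠i}, ε>0 there is τᵢ<∞ with ‖φ̄ᵢ(t,xᵢ,(w_{≠i},u))‖_{Xᵢ} ≤ ε + Σ_{j≠i}γᵢⱼ(‖wⱼ‖_∞) + γᵢ(‖u‖_𝒰) for all t≥τᵢ. Assume the interconnection Σ=(X,𝒰,φ) is a well-defined control system with the BIC property. If the gain operator Γ_⊕ satisfies the strong small-gain condition, then Σ is forward complete and weakly ISS, i.e., Σ is UGS and has the AG property. -/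

import Mathlib

open Set Filter

noncomputable section

/-- Class `K` comparison functions: continuous, strictly increasing on `[0,∞)`, vanishing at `0`. -/
def IsClassK (γ : ℝ → ℝ) : Prop :=
  ContinuousOn γ (Set.Ici 0) ∧ StrictMonoOn γ (Set.Ici 0) ∧ γ 0 = 0 ∧ ∀ r ≥ (0:ℝ), 0 ≤ γ r

/-- Class `K∞`: unbounded class `K` functions. -/
def IsClassKinf (γ : ℝ → ℝ) : Prop :=
  IsClassK γ ∧ ∀ M : ℝ, ∃ r ≥ (0:ℝ), M < γ r

/-- Class `K ∪ {0}`. -/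
def IsClassKZero (γ : ℝ → ℝ) : Prop := IsClassK γ ∨ γ = fun _ => 0

/-- Class `K∞ ∪ {0}`. -/
def IsClassKinfZero (γ : ℝ → ℝ) : Prop := IsClassKinf γ ∨ γ = fun _ => 0

/-- Class `L`: continuous, nonincreasing on `[0,∞)`, converging to `0` at infinity. -/
def IsClassL (γ : ℝ → ℝ) : Prop :=
  ContinuousOn γ (Set.Ici 0) ∧ AntitoneOn γ (Set.Ici 0) ∧
    Filter.Tendsto γ Filter.atTop (nhds 0) ∧ ∀ r ≥ (0:ℝ), 0 ≤ γ r

/-- Class `KL` functions. -/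
def IsClassKL (β : ℝ → ℝ → ℝ) : Prop :=
  (∀ t ≥ (0:ℝ), IsClassK (fun r => β r t)) ∧ (∀ r > (0:ℝ), IsClassL (fun t => β r t))

/-- A normed linear space of inputs: a set of functions `[0,∞) → U` (modeled on `ℝ`),
with a norm, satisfying the axioms of shift invariance and concatenation. -/
structure InputSpace (U : Type*) where
  carrier : Set (ℝ → U)
  normU : (ℝ → U) → ℝ
  nonempty : carrier.Nonempty
  normU_nonneg : ∀ u ∈ carrier, 0 ≤ normU u
  shift_mem : ∀ u ∈ carrier, ∀ τ ≥ (0:ℝ), (fun t => u (t + τ)) ∈ carrier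
  shift_norm : ∀ u ∈ carrier, ∀ τ ≥ (0:ℝ), normU (fun t => u (t + τ)) ≤ normU u
  concat_mem : ∀ u₁ ∈ carrier, ∀ u₂ ∈ carrier, ∀ t > (0:ℝ),
    (fun τ => if τ ≤ t then u₁ τ else u₂ (τ - t)) ∈ carrier

/-- Globally bounded, piecewise continuous, right-continuous functions on `[0,∞)`. -/
def PCFun {E : Type*} [NormedAddCommGroup E] (w : ℝ → E) : Prop :=
  (∃ M : ℝ, ∀ t ≥ (0:ℝ), ‖w t‖ ≤ M) ∧
  (∀ t ≥ (0:ℝ), ContinuousWithinAt w (Set.Ici t) t) ∧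
  (∀ T > (0:ℝ), ∃ s : Finset ℝ, ContinuousOn w (Set.Icc 0 T \ (s : Set ℝ)))

/-- Supremum of the norm of `w` over a set of times. -/
noncomputable def supNormOn {E : Type*} [NormedAddCommGroup E] (w : ℝ → E) (s : Set ℝ) : ℝ :=
  sSup ((fun t => ‖w t‖) '' s)

/-- The `i`-th subsystem `Σᵢ = (Xᵢ, PC(ℝ₊, X_{≠i}) × 𝒰, φ̄ᵢ)`: a forward complete control
system whose inputs are pairs of an internal input `w` (a `PC` function with values in the
product of the other state spaces) and an external input `u ∈ 𝒰`. -/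
structure Subsystem {n : ℕ} (X : Fin n → Type*) [∀ j, NormedAddCommGroup (X j)]
    (i : Fin n) {U : Type*} (inp : InputSpace U) where
  flow : ℝ → X i → (∀ j : {j : Fin n // j ≠ i}, ℝ → X j.1) → (ℝ → U) → X i
  identity : ∀ x w u, flow 0 x w u = x
  causality : ∀ t ≥ (0:ℝ), ∀ x : X i,
    ∀ w₁ w₂ : ∀ j : {j : Fin n // j ≠ i}, ℝ → X j.1,
    ∀ u ∈ inp.carrier, ∀ v ∈ inp.carrier,
    (∀ j, ∀ s ∈ Set.Icc 0 t, w₁ j s = w₂ j s) → (∀ s ∈ Set.Icc 0 t, u s = v s) →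
    flow t x w₁ u = flow t x w₂ v
  cont : ∀ x : X i, ∀ w : ∀ j : {j : Fin n // j ≠ i}, ℝ → X j.1, ∀ u ∈ inp.carrier,
    (∀ j, PCFun (w j)) → ContinuousOn (fun t => flow t x w u) (Set.Ici 0)
  cocycle : ∀ x : X i, ∀ w : ∀ j : {j : Fin n // j ≠ i}, ℝ → X j.1, ∀ u ∈ inp.carrier,
    (∀ j, PCFun (w j)) → ∀ t ≥ (0:ℝ), ∀ h ≥ (0:ℝ),
    flow h (flow t x w u) (fun j s => w j (s + t)) (fun s => u (s + t)) = flow (t + h) x w u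

/-- Norm of the combined input `(w, u)` of a subsystem:
`‖(w,u)‖ = √(Σ_{j≠i} ‖wⱼ‖∞² + ‖u‖_𝒰²)`. -/
noncomputable def pairNorm {n : ℕ} {X : Fin n → Type*} [∀ j, NormedAddCommGroup (X j)]
    {i : Fin n} (w : ∀ j : {j : Fin n // j ≠ i}, ℝ → X j.1) (r : ℝ) : ℝ :=
  Real.sqrt ((∑ j : {j : Fin n // j ≠ i}, (supNormOn (w j) (Set.Ici 0)) ^ 2) + r ^ 2)

namespace Subsystem

variable {n : ℕ} {X : Fin n → Type*} [∀ j, NormedAddCommGroup (X j)] {i : Fin n}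
  {U : Type*} {inp : InputSpace U}

/-- Input-to-state stability of the subsystem `Σᵢ`, with respect to the norm of the
whole input `(w, u)`. -/
def ISS (S : Subsystem X i inp) : Prop :=
  ∃ β : ℝ → ℝ → ℝ, ∃ γ : ℝ → ℝ, IsClassKL β ∧ IsClassK γ ∧
    ∀ t ≥ (0:ℝ), ∀ x : X i, ∀ w, (∀ j, PCFun (w j)) → ∀ u ∈ inp.carrier,
      ‖S.flow t x w u‖ ≤ β ‖x‖ t + γ (pairNorm w (inp.normU u))

/-- Uniform global stability of the subsystem `Σᵢ`. -/
def UGS (S : Subsystem X i inp) : Prop :=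
  ∃ σ γ : ℝ → ℝ, IsClassKinf σ ∧ IsClassKinfZero γ ∧
    ∀ t ≥ (0:ℝ), ∀ x : X i, ∀ w, (∀ j, PCFun (w j)) → ∀ u ∈ inp.carrier,
      ‖S.flow t x w u‖ ≤ σ ‖x‖ + γ (pairNorm w (inp.normU u))

/-- The asymptotic gain property of the subsystem `Σᵢ`. -/
def AG (S : Subsystem X i inp) : Prop :=
  ∃ γ : ℝ → ℝ, IsClassKinfZero γ ∧
    ∀ ε > (0:ℝ), ∀ x : X i, ∀ w, (∀ j, PCFun (w j)) → ∀ u ∈ inp.carrier,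
      ∃ τ ≥ (0:ℝ), ∀ t ≥ τ, ‖S.flow t x w u‖ ≤ ε + γ (pairNorm w (inp.normU u))

/-- The bounded input uniform asymptotic gain property of the subsystem `Σᵢ`. -/
def bUAG (S : Subsystem X i inp) : Prop :=
  ∃ γ : ℝ → ℝ, IsClassKinfZero γ ∧
    ∀ ε > (0:ℝ), ∀ r > (0:ℝ), ∃ τ ≥ (0:ℝ),
      ∀ x : X i, ∀ w, (∀ j, PCFun (w j)) → ∀ u ∈ inp.carrier,
        ‖x‖ ≤ r → pairNorm w (inp.normU u) ≤ r →
        ∀ t ≥ τ, ‖S.flow t x w u‖ ≤ ε + γ (pairNorm w (inp.normU u))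

end Subsystem

/-- The small-gain condition for an operator `A : ℝⁿ₊ → ℝⁿ₊`:
`A(s) ≱ s` for all `s ∈ ℝⁿ₊ \ {0}`. -/
def SmallGainCond (n : ℕ) (A : (Fin n → ℝ) → (Fin n → ℝ)) : Prop :=
  ∀ s : Fin n → ℝ, (∀ i, 0 ≤ s i) → s ≠ 0 → ¬ ∀ i, s i ≤ A s i

/-- The strong small-gain condition: `A ∘ D` satisfies the small-gain condition for some
diagonal operator `D(s)ᵢ = sᵢ + αᵢ(sᵢ)` with `αᵢ ∈ K∞`. -/
def StrongSmallGainCond (n : ℕ) (A : (Fin n → ℝ) → (Fin n → ℝ)) : Prop :=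
  ∃ α : Fin n → ℝ → ℝ, (∀ i, IsClassKinf (α i)) ∧
    SmallGainCond n (fun s => A (fun i => s i + α i (s i)))

/-- The summation-type gain operator `Γ_⊕` built from a gain matrix. -/
def gainOpSum (n : ℕ) (γmat : Fin n → Fin n → ℝ → ℝ) : (Fin n → ℝ) → (Fin n → ℝ) :=
  fun s i => ∑ j, γmat i j (s j)

/-- The maximization-type gain operator `Γ_⊗` built from a gain matrix. -/
noncomputable def gainOpMax (n : ℕ) (γmat : Fin n → Fin n → ℝ → ℝ) :
    (Fin n → ℝ) → (Fin n → ℝ) :=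
  fun s i => ⨆ j, γmat i j (s j)

/-- The norm on the product state space `X = X₁ × ⋯ × Xₙ`:
`‖x‖_X = √(Σᵢ ‖xᵢ‖²)`. -/
noncomputable def fullNorm {n : ℕ} {X : Fin n → Type*} [∀ j, NormedAddCommGroup (X j)]
    (x : ∀ j, X j) : ℝ :=
  Real.sqrt (∑ j, ‖x j‖ ^ 2)

/-- A control system on the product state space `X = X₁ × ⋯ × Xₙ`, with a domain of
definition, satisfying the identity, causality, continuity and cocycle axioms;
this models the coupled system `Σ` of the subsystems `Σ₁, …, Σₙ`. -/
structure CoupledSystem {n : ℕ} (X : Fin n → Type*) [∀ j, NormedAddCommGroup (X j)]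
    {U : Type*} (inp : InputSpace U) where
  dom : Set (ℝ × (∀ j, X j) × (ℝ → U))
  flow : ℝ → (∀ j, X j) → (ℝ → U) → ∀ j, X j
  dom_sub : ∀ p ∈ dom, 0 ≤ p.1 ∧ p.2.2 ∈ inp.carrier
  dom_exists : ∀ x : ∀ j, X j, ∀ u ∈ inp.carrier,
    ∃ t > (0:ℝ), ∀ s ∈ Set.Icc 0 t, (s, x, u) ∈ dom
  identity : ∀ x : ∀ j, X j, ∀ u ∈ inp.carrier, flow 0 x u = x
  causality : ∀ t ≥ (0:ℝ), ∀ x : ∀ j, X j, ∀ u ∈ inp.carrier, ∀ v ∈ inp.carrier,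
    (t, x, u) ∈ dom → (t, x, v) ∈ dom → (∀ s ∈ Set.Icc 0 t, u s = v s) →
    flow t x u = flow t x v
  cont : ∀ x : ∀ j, X j, ∀ u ∈ inp.carrier, ∀ j,
    ContinuousOn (fun t => flow t x u j) {t : ℝ | (t, x, u) ∈ dom}
  cocycle : ∀ x : ∀ j, X j, ∀ u ∈ inp.carrier, ∀ t ≥ (0:ℝ), ∀ h ≥ (0:ℝ),
    (∀ s ∈ Set.Icc 0 (t + h), (s, x, u) ∈ dom) →
    flow h (flow t x u) (fun s => u (s + t)) = flow (t + h) x u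

namespace CoupledSystem

variable {n : ℕ} {X : Fin n → Type*} [∀ j, NormedAddCommGroup (X j)]
  {U : Type*} {inp : InputSpace U}

/-- `C` is the feedback interconnection of the subsystems `S i`: whenever the solution of the
coupled system exists, its `i`-th component coincides with the trajectory of `Σᵢ` driven by
the other components as internal inputs and by the external input `u`. -/
def IsInterconnection (C : CoupledSystem X inp) (S : ∀ i, Subsystem X i inp) : Prop :=
  ∀ t x u, (t, x, u) ∈ C.dom → ∀ i : Fin n,
    C.flow t x u i = (S i).flow t (x i) (fun j s => C.flow s x u j.1) u

/-- Forward completeness of the coupled system. -/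
def ForwardComplete (C : CoupledSystem X inp) : Prop :=
  ∀ t ≥ (0:ℝ), ∀ x : ∀ j, X j, ∀ u ∈ inp.carrier, (t, x, u) ∈ C.dom

/-- The boundedness-implies-continuation property of the coupled system. -/
def BIC (C : CoupledSystem X inp) : Prop :=
  ∀ x : ∀ j, X j, ∀ u ∈ inp.carrier,
    (∀ t ≥ (0:ℝ), (t, x, u) ∈ C.dom) ∨
    ∃ tmax > (0:ℝ),
      (∀ t, 0 ≤ t → t < tmax → (t, x, u) ∈ C.dom) ∧
      (∀ t ≥ tmax, (t, x, u) ∉ C.dom) ∧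
      ∀ M > (0:ℝ), ∃ t, 0 ≤ t ∧ t < tmax ∧ M < fullNorm (C.flow t x u)

/-- Uniform global stability of the coupled system. -/
def UGS (C : CoupledSystem X inp) : Prop :=
  ∃ σ γ : ℝ → ℝ, IsClassKinf σ ∧ IsClassKinfZero γ ∧
    ∀ t x u, (t, x, u) ∈ C.dom →
      fullNorm (C.flow t x u) ≤ σ (fullNorm x) + γ (inp.normU u)

/-- Input-to-state stability of the coupled system. -/
def ISS (C : CoupledSystem X inp) : Prop :=
  ∃ β : ℝ → ℝ → ℝ, ∃ γ : ℝ → ℝ, IsClassKL β ∧ IsClassK γ ∧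
    ∀ t x u, (t, x, u) ∈ C.dom →
      fullNorm (C.flow t x u) ≤ β (fullNorm x) t + γ (inp.normU u)

/-- The asymptotic gain property of the coupled system. -/
def AG (C : CoupledSystem X inp) : Prop :=
  ∃ γ : ℝ → ℝ, IsClassKinfZero γ ∧
    ∀ ε > (0:ℝ), ∀ x : ∀ j, X j, ∀ u ∈ inp.carrier, ∃ τ ≥ (0:ℝ),
      ∀ t ≥ τ, fullNorm (C.flow t x u) ≤ ε + γ (inp.normU u)

end CoupledSystem

/-!
On an interval `[0, T]` of existence, causality lets one feed each subsystem the other components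
frozen after `T`, so the UGS estimates give `ρ ≤ Γ_⊕(ρ) + v` for the vector `ρ` of sup norms of the
components, with `v` controlled by `σ(‖x‖) + γ(‖u‖)`. The strong small-gain condition turns every
such inequality into a bound `ρᵢ ≤ Φ(max v)`: some coordinate must violate the small-gain
inequality for `Γ_⊕ ∘ D`, so it is bounded through `αᵢ⁻¹` and can be eliminated, and `n`
eliminations bound every coordinate. This a priori bound gives forward completeness (through BIC)
and UGS. For AG, applying the AG estimates to the tail of the trajectory shows that the limits
superior `ℓᵢ` of the component norms satisfy `ℓ ≤ Γ_⊕(ℓ + δ) + ε + γ(‖u‖)`, so `Φ` bounds them as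
well.
-/

open Topology

/-- The properties of `K ∪ {0}` functions that survive sums, maxima and compositions. -/
structure IsGainFun (γ : ℝ → ℝ) : Prop where
  continuousOn : ContinuousOn γ (Ici 0)
  monotoneOn : MonotoneOn γ (Ici 0)
  map_zero : γ 0 = 0
  nonneg : ∀ r, 0 ≤ r → 0 ≤ γ r

namespace IsGainFun

variable {γ δ : ℝ → ℝ}

theorem mono (hγ : IsGainFun γ) {a b : ℝ} (ha : 0 ≤ a) (hab : a ≤ b) : γ a ≤ γ b :=
  hγ.monotoneOn ha (ha.trans hab) hab

theorem id : IsGainFun fun r => r :=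
  ⟨continuousOn_id, monotone_id.monotoneOn _, rfl, fun _ h => h⟩

theorem add (hγ : IsGainFun γ) (hδ : IsGainFun δ) : IsGainFun fun r => γ r + δ r :=
  ⟨hγ.continuousOn.add hδ.continuousOn, hγ.monotoneOn.add hδ.monotoneOn,
    by simp [hγ.map_zero, hδ.map_zero], fun r hr => add_nonneg (hγ.nonneg r hr) (hδ.nonneg r hr)⟩

theorem max (hγ : IsGainFun γ) (hδ : IsGainFun δ) : IsGainFun fun r => max (γ r) (δ r) :=
  ⟨hγ.continuousOn.sup hδ.continuousOn,
    fun _ ha _ hb hab => max_le_max (hγ.monotoneOn ha hb hab) (hδ.monotoneOn ha hb hab),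
    by simp [hγ.map_zero, hδ.map_zero], fun r hr => (hγ.nonneg r hr).trans (le_max_left _ _)⟩

theorem const_mul (hγ : IsGainFun γ) {c : ℝ} (hc : 0 ≤ c) : IsGainFun fun r => c * γ r :=
  ⟨continuousOn_const.mul hγ.continuousOn,
    fun _ ha _ hb hab => mul_le_mul_of_nonneg_left (hγ.monotoneOn ha hb hab) hc,
    by simp [hγ.map_zero], fun r hr => mul_nonneg hc (hγ.nonneg r hr)⟩

theorem comp (hγ : IsGainFun γ) (hδ : IsGainFun δ) : IsGainFun (γ ∘ δ) :=
  ⟨hγ.continuousOn.comp hδ.continuousOn fun r hr => hδ.nonneg r hr,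
    fun _ ha _ hb hab => hγ.mono (hδ.nonneg _ ha) (hδ.monotoneOn ha hb hab),
    by simp [hγ.map_zero, hδ.map_zero], fun r hr => hγ.nonneg _ (hδ.nonneg r hr)⟩

theorem sum {ι : Type*} (s : Finset ι) {γ : ι → ℝ → ℝ} (hγ : ∀ i ∈ s, IsGainFun (γ i)) :
    IsGainFun fun r => ∑ i ∈ s, γ i r :=
  ⟨continuousOn_finsetSum _ fun i hi => (hγ i hi).continuousOn,
    fun _ ha _ hb hab => Finset.sum_le_sum fun i hi => (hγ i hi).monotoneOn ha hb hab,
    Finset.sum_eq_zero fun i hi => (hγ i hi).map_zero,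
    fun r hr => Finset.sum_nonneg fun i hi => (hγ i hi).nonneg r hr⟩

theorem map_add_le (hγ : IsGainFun γ) {a b : ℝ} (ha : 0 ≤ a) (hb : 0 ≤ b) :
    γ (a + b) ≤ γ (2 * a) + γ (2 * b) := by
  rcases le_total a b with hab | hab
  · linarith [hγ.mono (add_nonneg ha hb) (by linarith : a + b ≤ 2 * b),
      hγ.nonneg (2 * a) (by linarith)]
  · linarith [hγ.mono (add_nonneg ha hb) (by linarith : a + b ≤ 2 * a),
      hγ.nonneg (2 * b) (by linarith)]

theorem isClassKinf_id_add (hγ : IsGainFun γ) : IsClassKinf fun r => r + γ r := by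
  refine ⟨⟨(IsGainFun.id.add hγ).continuousOn, fun a ha b hb hab => ?_, by simp [hγ.map_zero],
    (IsGainFun.id.add hγ).nonneg⟩, fun M => ⟨|M| + 1, by positivity, ?_⟩⟩
  · linarith [hγ.monotoneOn ha hb hab.le]
  · linarith [le_abs_self M, hγ.nonneg (|M| + 1) (by positivity)]

end IsGainFun

theorem IsClassK.isGainFun {γ : ℝ → ℝ} (hγ : IsClassK γ) : IsGainFun γ :=
  ⟨hγ.1, hγ.2.1.monotoneOn, hγ.2.2.1, hγ.2.2.2⟩

theorem IsClassKZero.isGainFun {γ : ℝ → ℝ} (hγ : IsClassKZero γ) : IsGainFun γ := by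
  rcases hγ with hγ | rfl
  · exact hγ.isGainFun
  · exact ⟨continuousOn_const, monotoneOn_const, rfl, fun _ _ => le_rfl⟩

namespace IsClassKinf

variable {α : ℝ → ℝ}

theorem isGainFun (hα : IsClassKinf α) : IsGainFun α := hα.1.isGainFun

theorem exists_eq (hα : IsClassKinf α) {y : ℝ} (hy : 0 ≤ y) : ∃ s, 0 ≤ s ∧ α s = y := by
  obtain ⟨b, hb, hyb⟩ := hα.2 y
  obtain ⟨s, hs, rfl⟩ := intermediate_value_Icc hb (hα.1.1.mono Icc_subset_Ici_self)
    ⟨by rw [hα.1.2.2.1]; exact hy, hyb.le⟩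
  exact ⟨s, hs.1, rfl⟩

theorem id_add (hα : IsClassKinf α) : IsClassKinf fun r => r + α r :=
  hα.isGainFun.isClassKinf_id_add

/-- `α` extended by the identity on `(-∞, 0)` is an order automorphism of `ℝ`; its inverse is
automatically continuous. -/
theorem exists_isGainFun_leftInverse (hα : IsClassKinf α) :
    ∃ g, IsGainFun g ∧ ∀ s, 0 ≤ s → g (α s) = s := by
  set f : ℝ → ℝ := fun x => if 0 ≤ x then α x else x with hf
  have hpos : ∀ {x}, 0 ≤ x → f x = α x := fun hx => if_pos hx
  have hneg : ∀ {x}, x < 0 → f x = x := fun hx => if_neg hx.not_ge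
  have hmono : StrictMono f := by
    intro a b hab
    rcases lt_or_ge a 0 with ha | ha
    · rcases lt_or_ge b 0 with hb | hb
      · rwa [hneg ha, hneg hb]
      · rw [hneg ha, hpos hb]; linarith [hα.isGainFun.nonneg b hb]
    · rw [hpos ha, hpos (ha.trans hab.le)]; exact hα.1.2.1 ha (ha.trans hab.le) hab
  have hsurj : Function.Surjective f := by
    intro y
    rcases lt_or_ge y 0 with hy | hy
    · exact ⟨y, hneg hy⟩
    · obtain ⟨s, hs, rfl⟩ := hα.exists_eq hy
      exact ⟨s, hpos hs⟩
  let e := StrictMono.orderIsoOfSurjective f hmono hsurj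
  have hinv : ∀ s, 0 ≤ s → e.symm (α s) = s := fun s hs => by
    rw [← hpos hs]; exact StrictMono.orderIsoOfSurjective_symm_apply_self f hmono hsurj s
  have hzero : e.symm 0 = 0 := by simpa [hα.isGainFun.map_zero] using hinv 0 le_rfl
  refine ⟨e.symm, ⟨e.symm.continuous.continuousOn, e.symm.monotone.monotoneOn _, hzero,
    fun r hr => hzero ▸ e.symm.monotone hr⟩, hinv⟩

end IsClassKinf

section SmallGain

variable {n : ℕ} {γmat : Fin n → Fin n → ℝ → ℝ}

def IsSmallGainBound (γmat : Fin n → Fin n → ℝ → ℝ) (Φ : ℝ → ℝ) : Prop :=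
  ∀ w v : Fin n → ℝ, (∀ i, 0 ≤ w i) → (∀ i, 0 ≤ v i) →
    (∀ i, w i ≤ gainOpSum n γmat w i + v i) → ∀ r, 0 ≤ r → (∀ i, v i ≤ r) → ∀ i, w i ≤ Φ r

/-- Otherwise `D⁻¹(w)`, extended by `0` outside `I`, would violate the small-gain condition
for `Γ_⊕ ∘ D`. -/
theorem exists_mem_eq_add_le_of_smallGainCond {α : Fin n → ℝ → ℝ} (hα : ∀ i, IsClassKinf (α i))
    (hγ : ∀ i j, IsGainFun (γmat i j))
    (hsg : SmallGainCond n fun s => gainOpSum n γmat fun i => s i + α i (s i))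
    {I : Finset (Fin n)} (hI : I.Nonempty) {w v : Fin n → ℝ} (hw : ∀ i, 0 ≤ w i)
    (hv : ∀ i, 0 ≤ v i) (hineq : ∀ i ∈ I, w i ≤ ∑ j ∈ I, γmat i j (w j) + v i) :
    ∃ i ∈ I, ∃ s, 0 ≤ s ∧ w i = s + α i s ∧ α i s ≤ v i := by
  classical
  choose t ht_nonneg ht_eq using fun p => (hα p).id_add.exists_eq (hw p)
  by_contra! hlt
  set s : Fin n → ℝ := fun p => if p ∈ I then t p else 0 with hs_def
  have hs_nonneg : ∀ p, 0 ≤ s p := fun p => by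
    by_cases hp : p ∈ I <;> simp [hs_def, hp, ht_nonneg]
  have hΓ : ∀ i, gainOpSum n γmat (fun j => s j + α j (s j)) i = ∑ j ∈ I, γmat i j (w j) := by
    intro i
    rw [gainOpSum, ← Finset.sum_subset (Finset.subset_univ I)]
    · refine Finset.sum_congr rfl fun j hj => ?_
      simp [hs_def, hj, ht_eq]
    · intro j _ hj
      simp [hs_def, hj, (hα j).isGainFun.map_zero, (hγ i j).map_zero]
  have hs_zero : s = 0 := by
    by_contra hs_ne
    refine hsg s hs_nonneg hs_ne fun i => ?_
    show s i ≤ gainOpSum n γmat (fun j => s j + α j (s j)) i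
    rw [hΓ i]
    by_cases hi : i ∈ I
    · have h := hineq i hi
      have := hlt i hi (t i) (ht_nonneg i) (ht_eq i).symm
      simp only [hs_def, hi, if_true]
      linarith [ht_eq i]
    · rw [show s i = 0 by simp [hs_def, hi]]
      exact Finset.sum_nonneg fun j _ => (hγ i j).nonneg (w j) (hw j)
  obtain ⟨i, hi⟩ := hI
  have ht_zero : t i = 0 := by simpa [hs_def, hi] using congr_fun hs_zero i
  have := hlt i hi (t i) (ht_nonneg i) (ht_eq i).symm
  rw [ht_zero, (hα i).isGainFun.map_zero] at this
  linarith [hv i]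

def invSumBound (g : Fin n → ℝ → ℝ) (r : ℝ) : ℝ := r + ∑ i, g i r

/-- Eliminating one coordinate `i₀` bounds `w i₀` by `invSumBound g r`; the remaining coordinates
satisfy the same kind of inequality with inputs enlarged by `γ p i₀ (w i₀)`. -/
def smallGainBound (g : Fin n → ℝ → ℝ) (γmat : Fin n → Fin n → ℝ → ℝ) : ℕ → ℝ → ℝ
  | 0, _ => 0
  | k + 1, r => max (invSumBound g r)
      (smallGainBound g γmat k (r + ∑ p, ∑ q, γmat p q (invSumBound g r)))

variable {g : Fin n → ℝ → ℝ}

theorem isGainFun_invSumBound (hg : ∀ i, IsGainFun (g i)) : IsGainFun (invSumBound g) :=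
  IsGainFun.id.add (IsGainFun.sum _ fun i _ => hg i)

theorem isGainFun_smallGainBound (hg : ∀ i, IsGainFun (g i)) (hγ : ∀ i j, IsGainFun (γmat i j))
    (k : ℕ) : IsGainFun (smallGainBound g γmat k) := by
  induction k with
  | zero => exact ⟨continuousOn_const, monotoneOn_const, rfl, fun _ _ => le_rfl⟩
  | succ k ih =>
    have hG : IsGainFun fun t => ∑ p, ∑ q, γmat p q t :=
      IsGainFun.sum _ fun p _ => IsGainFun.sum _ fun q _ => hγ p q
    exact (isGainFun_invSumBound hg).max (ih.comp (IsGainFun.id.add (hG.comp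
      (isGainFun_invSumBound hg))))

theorem add_le_invSumBound (hg : ∀ i, IsGainFun (g i)) {α : Fin n → ℝ → ℝ}
    (hα : ∀ i, IsClassKinf (α i)) (hginv : ∀ i s, 0 ≤ s → g i (α i s) = s) {i : Fin n}
    {s r : ℝ} (hs : 0 ≤ s) (hsr : α i s ≤ r) (hr : 0 ≤ r) : s + α i s ≤ invSumBound g r := by
  have hαs : 0 ≤ α i s := (hα i).isGainFun.nonneg s hs
  have hgs : s ≤ g i r := calc
    s = g i (α i s) := (hginv i s hs).symm
    _ ≤ g i r := (hg i).mono hαs hsr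
  have hsum : g i r ≤ ∑ j, g j r :=
    Finset.single_le_sum (fun j _ => (hg j).nonneg r hr) (Finset.mem_univ i)
  rw [invSumBound]
  linarith

theorem le_smallGainBound {α : Fin n → ℝ → ℝ} (hα : ∀ i, IsClassKinf (α i))
    (hg : ∀ i, IsGainFun (g i)) (hginv : ∀ i s, 0 ≤ s → g i (α i s) = s)
    (hγ : ∀ i j, IsGainFun (γmat i j))
    (hsg : SmallGainCond n fun s => gainOpSum n γmat fun i => s i + α i (s i)) (k : ℕ) :
    ∀ I : Finset (Fin n), I.card ≤ k → ∀ w v : Fin n → ℝ, (∀ i, 0 ≤ w i) → (∀ i, 0 ≤ v i) →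
      (∀ i ∈ I, w i ≤ ∑ j ∈ I, γmat i j (w j) + v i) → ∀ r, 0 ≤ r → (∀ i ∈ I, v i ≤ r) →
      ∀ i ∈ I, w i ≤ smallGainBound g γmat k r := by
  classical
  induction k with
  | zero =>
    intro I hI _ _ _ _ _ _ _ _ i hi
    simp [Finset.card_eq_zero.mp (Nat.le_zero.mp hI)] at hi
  | succ k ih =>
    intro I hI w v hw hv hineq r hr hvr i hi
    obtain ⟨i₀, hi₀, s, hs, hws, hsv⟩ :=
      exists_mem_eq_add_le_of_smallGainCond hα hγ hsg ⟨i, hi⟩ hw hv hineq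
    have hwi₀ : w i₀ ≤ invSumBound g r :=
      hws ▸ add_le_invSumBound hg hα hginv hs (hsv.trans (hvr i₀ hi₀)) hr
    rcases eq_or_ne i i₀ with rfl | hne
    · exact hwi₀.trans (le_max_left _ _)
    have hθ : 0 ≤ invSumBound g r := (isGainFun_invSumBound hg).nonneg r hr
    refine le_trans ?_ (le_max_right _ _)
    refine ih (I.erase i₀) (by rw [Finset.card_erase_of_mem hi₀]; omega) w
      (fun p => v p + γmat p i₀ (w i₀)) hw (fun p => add_nonneg (hv p) ((hγ p i₀).nonneg _ (hw i₀)))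
      (fun p hp => ?_) _
      (add_nonneg hr <|
        Finset.sum_nonneg fun p _ => Finset.sum_nonneg fun q _ => (hγ p q).nonneg _ hθ)
      (fun p hp => ?_) i (Finset.mem_erase.mpr ⟨hne, hi⟩)
    · have h := hineq p (Finset.mem_of_mem_erase hp)
      rw [← Finset.sum_erase_add I _ hi₀] at h
      linarith
    · calc v p + γmat p i₀ (w i₀)
          ≤ r + γmat p i₀ (invSumBound g r) := add_le_add (hvr p (Finset.mem_of_mem_erase hp))
            ((hγ p i₀).mono (hw i₀) hwi₀)
        _ ≤ r + ∑ p, ∑ q, γmat p q (invSumBound g r) := by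
          gcongr
          refine (Finset.single_le_sum (fun q _ => (hγ p q).nonneg _ hθ) (Finset.mem_univ i₀)).trans
            (Finset.single_le_sum (f := fun p => ∑ q, γmat p q (invSumBound g r))
              (fun p _ => Finset.sum_nonneg fun q _ => (hγ p q).nonneg _ hθ) (Finset.mem_univ p))

theorem StrongSmallGainCond.exists_isSmallGainBound (hγ : ∀ i j, IsGainFun (γmat i j))
    (hsg : StrongSmallGainCond n (gainOpSum n γmat)) :
    ∃ Φ, IsGainFun Φ ∧ IsSmallGainBound γmat Φ := by
  obtain ⟨α, hα, hsg⟩ := hsg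
  choose g hg hginv using fun i => (hα i).exists_isGainFun_leftInverse
  refine ⟨smallGainBound g γmat n, isGainFun_smallGainBound hg hγ n,
    fun w v hw hv hineq r hr hvr i => ?_⟩
  exact le_smallGainBound hα hg hginv hγ hsg n Finset.univ (by simp) w v hw hv
    (fun i _ => by simpa [gainOpSum] using hineq i) r hr (fun i _ => hvr i) i (Finset.mem_univ i)

end SmallGain

theorem PCFun.of_continuousOn {E : Type*} [NormedAddCommGroup E] {w : ℝ → E} {M : ℝ}
    (hb : ∀ t ≥ (0:ℝ), ‖w t‖ ≤ M) (hc : ContinuousOn w (Ici 0)) : PCFun w :=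
  ⟨⟨M, hb⟩, fun _ ht => (hc _ ht).mono (Ici_subset_Ici.mpr ht),
    fun _ _ => ⟨∅, by simpa using hc.mono Icc_subset_Ici_self⟩⟩

section SupNorm

variable {E : Type*} [NormedAddCommGroup E] {w : ℝ → E} {s : Set ℝ}

theorem supNormOn_nonneg (w : ℝ → E) (s : Set ℝ) : 0 ≤ supNormOn w s :=
  Real.sSup_nonneg <| forall_mem_image.2 fun _ _ => norm_nonneg _

theorem supNormOn_le (hs : s.Nonempty) {b : ℝ} (h : ∀ t ∈ s, ‖w t‖ ≤ b) : supNormOn w s ≤ b :=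
  csSup_le (hs.image _) (forall_mem_image.2 h)

theorem norm_le_supNormOn (hbdd : BddAbove ((fun t => ‖w t‖) '' s)) {t : ℝ} (ht : t ∈ s) :
    ‖w t‖ ≤ supNormOn w s :=
  le_csSup hbdd (mem_image_of_mem _ ht)

end SupNorm

section FullNorm

variable {n : ℕ} {X : Fin n → Type*} [∀ j, NormedAddCommGroup (X j)]

theorem fullNorm_nonneg (x : ∀ j, X j) : 0 ≤ fullNorm x := Real.sqrt_nonneg _

theorem norm_le_fullNorm (x : ∀ j, X j) (i : Fin n) : ‖x i‖ ≤ fullNorm x :=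
  Real.le_sqrt_of_sq_le <|
    Finset.single_le_sum (f := fun j => ‖x j‖ ^ 2) (fun _ _ => sq_nonneg _) (Finset.mem_univ i)

theorem fullNorm_le_sqrt_mul {x : ∀ j, X j} {m : ℝ} (hm : 0 ≤ m) (h : ∀ i, ‖x i‖ ≤ m) :
    fullNorm x ≤ √n * m := by
  have hsum : ∑ j, ‖x j‖ ^ 2 ≤ n * m ^ 2 := by
    simpa using Finset.sum_le_sum (s := Finset.univ) fun j _ =>
      pow_le_pow_left₀ (norm_nonneg (x j)) (h j) 2
  calc fullNorm x ≤ √(n * m ^ 2) := Real.sqrt_le_sqrt hsum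
    _ = √n * m := by rw [Real.sqrt_mul (Nat.cast_nonneg n), Real.sqrt_sq hm]

end FullNorm

section Interconnection

variable {n : ℕ} {X : Fin n → Type*} [∀ j, NormedAddCommGroup (X j)]
  {U : Type*} {inp : InputSpace U}

def UGSSumEstimate (S : ∀ i, Subsystem X i inp) (σ : Fin n → ℝ → ℝ)
    (γmat : Fin n → Fin n → ℝ → ℝ) (γext : Fin n → ℝ → ℝ) : Prop :=
  ∀ i : Fin n, ∀ x : X i, ∀ w, (∀ j, PCFun (w j)) → ∀ u ∈ inp.carrier, ∀ t ≥ (0:ℝ),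
    ‖(S i).flow t x w u‖ ≤ σ i ‖x‖
      + (∑ j : {j : Fin n // j ≠ i}, γmat i j.1 (supNormOn (w j) (Icc 0 t)))
      + γext i (inp.normU u)

def AGSumEstimate (S : ∀ i, Subsystem X i inp) (γmat : Fin n → Fin n → ℝ → ℝ)
    (γext : Fin n → ℝ → ℝ) : Prop :=
  ∀ i : Fin n, ∀ x : X i, ∀ u ∈ inp.carrier, ∀ w, (∀ j, PCFun (w j)) →
    ∀ ε > (0:ℝ), ∃ τ ≥ (0:ℝ), ∀ t ≥ τ,
      ‖(S i).flow t x w u‖ ≤ ε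
        + (∑ j : {j : Fin n // j ≠ i}, γmat i j.1 (supNormOn (w j) (Ici 0)))
        + γext i (inp.normU u)

variable {S : ∀ i, Subsystem X i inp} {C : CoupledSystem X inp}
  {σ γext : Fin n → ℝ → ℝ} {γmat : Fin n → Fin n → ℝ → ℝ} {x : ∀ j, X j} {u : ℝ → U}

theorem sum_ne_supNormOn_le_gainOpSum (hγ : ∀ i j, IsGainFun (γmat i j))
    (hdiag : ∀ i, γmat i i = fun _ => 0) {i : Fin n} {w : ∀ j : {j : Fin n // j ≠ i}, ℝ → X j.1}
    {s : Set ℝ} (hs : s.Nonempty) {b : Fin n → ℝ} (hb : ∀ j, ∀ t ∈ s, ‖w j t‖ ≤ b j) :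
    ∑ j : {j : Fin n // j ≠ i}, γmat i j.1 (supNormOn (w j) s) ≤ gainOpSum n γmat b i := by
  classical
  rw [gainOpSum, Fintype.sum_eq_add_sum_subtype_ne _ i, hdiag i, zero_add]
  exact Finset.sum_le_sum fun j _ => (hγ i j).mono (supNormOn_nonneg _ _) (supNormOn_le hs (hb j))

namespace CoupledSystem

theorem bddAbove_norm_flow (hu : u ∈ inp.carrier) {T : ℝ}
    (hdom : ∀ s ∈ Icc 0 T, (s, x, u) ∈ C.dom) (j : Fin n) :
    BddAbove ((fun s => ‖C.flow s x u j‖) '' Icc 0 T) :=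
  isCompact_Icc.bddAbove_image <| continuous_norm.comp_continuousOn <|
    (C.cont x u hu j).mono hdom

theorem BIC.forwardComplete (hBIC : C.BIC)
    (hbound : ∀ x, ∀ u ∈ inp.carrier, ∃ M, ∀ T, 0 ≤ T →
      (∀ s ∈ Icc 0 T, (s, x, u) ∈ C.dom) → fullNorm (C.flow T x u) ≤ M) :
    C.ForwardComplete := by
  intro T hT x u hu
  rcases hBIC x u hu with h | ⟨tmax, -, hdom, -, hblow⟩
  · exact h T hT
  obtain ⟨M, hM⟩ := hbound x u hu
  obtain ⟨t, ht, htmax, hlt⟩ := hblow (|M| + 1) (by positivity)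
  have := hM t ht fun s hs => hdom s hs.1 (hs.2.trans_lt htmax)
  linarith [le_abs_self M]

theorem ugs_of_fullNorm_le {Φ a b : ℝ → ℝ} (hΦ : IsGainFun Φ) (ha : IsGainFun a)
    (hb : IsGainFun b) {c : ℝ} (hc : 0 ≤ c)
    (h : ∀ t x u, (t, x, u) ∈ C.dom →
      fullNorm (C.flow t x u) ≤ c * Φ (a (fullNorm x) + b (inp.normU u))) :
    C.UGS := by
  refine ⟨fun r => r + c * Φ (2 * a r), fun r => r + c * Φ (2 * b r),
    ((hΦ.comp (ha.const_mul zero_le_two)).const_mul hc).isClassKinf_id_add,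
    Or.inl ((hΦ.comp (hb.const_mul zero_le_two)).const_mul hc).isClassKinf_id_add,
    fun t x u hdom => ?_⟩
  have hu₀ := inp.normU_nonneg u (C.dom_sub _ hdom).2
  have hx₀ := fullNorm_nonneg x
  have hsplit := hΦ.map_add_le (ha.nonneg _ hx₀) (hb.nonneg _ hu₀)
  have := mul_le_mul_of_nonneg_left hsplit hc
  linarith [h t x u hdom]

def limsupNorm (C : CoupledSystem X inp) (x : ∀ j, X j) (u : ℝ → U) (j : Fin n) : ℝ :=
  limsup (fun t => ‖C.flow t x u j‖) atTop

theorem isBoundedUnder_norm_flow {B : ℝ} {j : Fin n} (hB : ∀ t ≥ (0:ℝ), ‖C.flow t x u j‖ ≤ B) :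
    IsBoundedUnder (· ≤ ·) atTop fun t => ‖C.flow t x u j‖ :=
  isBoundedUnder_of_eventually_le ((eventually_ge_atTop 0).mono hB)

theorem limsupNorm_nonneg {B : ℝ} {j : Fin n} (hB : ∀ t ≥ (0:ℝ), ‖C.flow t x u j‖ ≤ B) :
    0 ≤ C.limsupNorm x u j :=
  le_limsup_of_frequently_le (Frequently.of_forall fun _ => norm_nonneg _)
    (isBoundedUnder_norm_flow hB)

theorem eventually_norm_flow_le {B : ℝ} (hB : ∀ j, ∀ t ≥ (0:ℝ), ‖C.flow t x u j‖ ≤ B)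
    {δ : ℝ} (hδ : 0 < δ) : ∀ᶠ t in atTop, ∀ j, ‖C.flow t x u j‖ ≤ C.limsupNorm x u j + δ :=
  eventually_all.2 fun j => (eventually_lt_of_limsup_lt (lt_add_of_pos_right _ hδ)
    (isBoundedUnder_norm_flow (hB j))).mono fun _ h => h.le

theorem ag_of_limsupNorm_le {Ψ : ℝ → ℝ} (hΨ : IsGainFun Ψ)
    (h : ∀ x, ∀ u ∈ inp.carrier, (∃ B, ∀ j, ∀ t ≥ (0:ℝ), ‖C.flow t x u j‖ ≤ B) ∧
      ∀ j, C.limsupNorm x u j ≤ Ψ (inp.normU u)) :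
    C.AG := by
  refine ⟨fun r => r + √n * Ψ r, Or.inl (hΨ.const_mul (Real.sqrt_nonneg _)).isClassKinf_id_add,
    fun ε hε x u hu => ?_⟩
  obtain ⟨⟨B, hB⟩, hℓ⟩ := h x u hu
  have hu₀ := inp.normU_nonneg u hu
  have hn : 0 ≤ √(n : ℝ) := Real.sqrt_nonneg _
  set δ := ε / (√n + 1)
  have hδ : 0 < δ := by positivity
  have hnδ : √n * δ ≤ ε := by
    rw [mul_div_assoc', div_le_iff₀ (by positivity)]
    nlinarith
  obtain ⟨τ, hτ⟩ := eventually_atTop.1 (C.eventually_norm_flow_le hB hδ)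
  refine ⟨max τ 0, le_max_right _ _, fun t ht => ?_⟩
  have hΨu := hΨ.nonneg _ hu₀
  calc fullNorm (C.flow t x u) ≤ √n * (Ψ (inp.normU u) + δ) :=
        fullNorm_le_sqrt_mul (by positivity) fun j =>
          (hτ t (le_of_max_le_left ht) j).trans (by linarith [hℓ j])
    _ ≤ ε + (inp.normU u + √n * Ψ (inp.normU u)) := by nlinarith

namespace IsInterconnection

/-- Internal inputs frozen after time `T` are in `PC` and drive the same trajectory up to `T`. -/
theorem norm_flow_le (hic : C.IsInterconnection S) (hUGS : UGSSumEstimate S σ γmat γext)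
    (hγ : ∀ i j, IsGainFun (γmat i j)) (hdiag : ∀ i, γmat i i = fun _ => 0)
    (hu : u ∈ inp.carrier) {T : ℝ} (hdom : ∀ s ∈ Icc 0 T, (s, x, u) ∈ C.dom) (i : Fin n)
    {τ : ℝ} (hτ : τ ∈ Icc 0 T) :
    ‖C.flow τ x u i‖ ≤ gainOpSum n γmat (fun j => supNormOn (fun s => C.flow s x u j) (Icc 0 T)) i
      + (σ i ‖x i‖ + γext i (inp.normU u)) := by
  have hT : 0 ≤ T := hτ.1.trans hτ.2
  have hclip : ∀ s, 0 ≤ s → min s T ∈ Icc 0 T := fun s hs => ⟨le_min hs hT, min_le_right _ _⟩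
  set W : ∀ j : {j : Fin n // j ≠ i}, ℝ → X j.1 := fun j s => C.flow (min s T) x u j
  have hW : ∀ j, PCFun (W j) := fun j =>
    PCFun.of_continuousOn
      (fun s hs => norm_le_supNormOn (C.bddAbove_norm_flow hu hdom j) (hclip s hs))
      (((C.cont x u hu j).mono hdom).comp (continuous_id.min continuous_const).continuousOn hclip)
  have hflow : C.flow τ x u i = (S i).flow τ (x i) W u := by
    rw [hic τ x u (hdom τ hτ) i]
    refine (S i).causality τ hτ.1 (x i) _ W u hu u hu (fun j s hs => ?_) fun _ _ => rfl
    simp only [W, min_eq_left (hs.2.trans hτ.2)]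
  have hsum := sum_ne_supNormOn_le_gainOpSum hγ hdiag (w := W) (s := Icc 0 τ)
    (b := fun j => supNormOn (fun s => C.flow s x u j) (Icc 0 T)) ⟨0, le_rfl, hτ.1⟩
    fun j s hs => norm_le_supNormOn (C.bddAbove_norm_flow hu hdom j) (hclip s hs.1)
  rw [hflow]
  linarith [hUGS i (x i) W hW u hu τ hτ.1]

theorem norm_flow_le_smallGainBound (hic : C.IsInterconnection S)
    (hUGS : UGSSumEstimate S σ γmat γext) (hσ : ∀ i, IsGainFun (σ i))
    (hγ : ∀ i j, IsGainFun (γmat i j)) (hγext : ∀ i, IsGainFun (γext i))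
    (hdiag : ∀ i, γmat i i = fun _ => 0) {Φ : ℝ → ℝ} (hΦ : IsSmallGainBound γmat Φ)
    (hu : u ∈ inp.carrier) {T : ℝ} (hT : 0 ≤ T) (hdom : ∀ s ∈ Icc 0 T, (s, x, u) ∈ C.dom)
    (i : Fin n) :
    ‖C.flow T x u i‖ ≤ Φ (∑ j, σ j (fullNorm x) + ∑ j, γext j (inp.normU u)) := by
  have hu₀ := inp.normU_nonneg u hu
  have hx₀ := fullNorm_nonneg x
  have hv : ∀ j, σ j ‖x j‖ + γext j (inp.normU u) ≤
      ∑ j, σ j (fullNorm x) + ∑ j, γext j (inp.normU u) := fun j => add_le_add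
    (((hσ j).mono (norm_nonneg _) (norm_le_fullNorm x j)).trans
      (Finset.single_le_sum (fun k _ => (hσ k).nonneg _ hx₀) (Finset.mem_univ j)))
    (Finset.single_le_sum (fun k _ => (hγext k).nonneg _ hu₀) (Finset.mem_univ j))
  calc ‖C.flow T x u i‖ ≤ supNormOn (fun s => C.flow s x u i) (Icc 0 T) :=
        norm_le_supNormOn (C.bddAbove_norm_flow hu hdom i) ⟨hT, le_rfl⟩
    _ ≤ _ := hΦ (fun j => supNormOn (fun s => C.flow s x u j) (Icc 0 T))
        (fun j => σ j ‖x j‖ + γext j (inp.normU u)) (fun j => supNormOn_nonneg _ _)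
        (fun j => add_nonneg ((hσ j).nonneg _ (norm_nonneg _)) ((hγext j).nonneg _ hu₀))
        (fun j => supNormOn_le (s := Icc 0 T) ⟨0, le_rfl, hT⟩ fun τ hτ =>
          hic.norm_flow_le hUGS hγ hdiag hu hdom j hτ)
        _ (add_nonneg (Finset.sum_nonneg fun k _ => (hσ k).nonneg _ hx₀)
          (Finset.sum_nonneg fun k _ => (hγext k).nonneg _ hu₀)) hv i

theorem flow_add (hic : C.IsInterconnection S) (hfc : C.ForwardComplete) (hu : u ∈ inp.carrier)
    (hpc : ∀ j, PCFun fun s => C.flow s x u j) {T h : ℝ} (hT : 0 ≤ T) (hh : 0 ≤ h) (i : Fin n) :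
    C.flow (T + h) x u i = (S i).flow h (C.flow T x u i)
      (fun j s => C.flow (s + T) x u j.1) (fun s => u (s + T)) := by
  rw [hic T x u (hfc T hT x u hu) i, hic (T + h) x u (hfc _ (by linarith) x u hu) i]
  exact ((S i).cocycle (x i) _ u hu (fun j => hpc j.1) T hT h hh).symm

/-- The AG estimate applied to the tail of the trajectory after a time `T` from which on every
component stays below `limsupNorm + δ`. -/
theorem limsupNorm_le (hic : C.IsInterconnection S) (hAG : AGSumEstimate S γmat γext)
    (hγ : ∀ i j, IsGainFun (γmat i j)) (hγext : ∀ i, IsGainFun (γext i))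
    (hdiag : ∀ i, γmat i i = fun _ => 0) (hfc : C.ForwardComplete) (hu : u ∈ inp.carrier)
    {B : ℝ} (hB : ∀ j, ∀ t ≥ (0:ℝ), ‖C.flow t x u j‖ ≤ B) (i : Fin n) {δ ε : ℝ} (hδ : 0 < δ)
    (hε : 0 < ε) :
    C.limsupNorm x u i ≤
      ε + gainOpSum n γmat (fun j => C.limsupNorm x u j + δ) i + γext i (inp.normU u) := by
  obtain ⟨T₀, hT₀⟩ := eventually_atTop.1 (C.eventually_norm_flow_le hB hδ)
  set T := max T₀ 0
  have hT : 0 ≤ T := le_max_right _ _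
  have hcont : ∀ j, ContinuousOn (fun s => C.flow s x u j) (Ici 0) := fun j =>
    (C.cont x u hu j).mono fun s hs => hfc s hs x u hu
  have hpc : ∀ j, PCFun fun s => C.flow s x u j := fun j => PCFun.of_continuousOn (hB j) (hcont j)
  have hW : ∀ j : {j : Fin n // j ≠ i}, PCFun fun s => C.flow (s + T) x u j :=
    fun j => PCFun.of_continuousOn (fun s hs => hB j (s + T) (by linarith))
      ((hcont j).comp (continuous_add_const T).continuousOn fun s hs => by
        simp only [mem_Ici] at hs ⊢; linarith)
  have hush := inp.shift_mem u hu T hT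
  obtain ⟨τ, hτ₀, hτ⟩ := hAG i (C.flow T x u i) _ hush _ hW ε hε
  have hsum := sum_ne_supNormOn_le_gainOpSum hγ hdiag (i := i)
    (w := fun j s => C.flow (s + T) x u j.1) (s := Ici 0) (b := fun j => C.limsupNorm x u j + δ)
    ⟨0, mem_Ici.2 le_rfl⟩
    fun j s hs => hT₀ (s + T) (by simp only [mem_Ici] at hs; linarith [le_max_left T₀ 0]) j
  have hext := (hγext i).mono (inp.normU_nonneg _ hush) (inp.shift_norm u hu T hT)
  refine limsup_le_of_le (isCoboundedUnder_le_of_le atTop fun _ => norm_nonneg _)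
    (eventually_atTop.2 ⟨τ + T, fun t ht => ?_⟩)
  have hshift := hic.flow_add hfc hu hpc hT (h := t - T) (by linarith) i
  rw [add_sub_cancel] at hshift
  rw [hshift]
  linarith [hτ (t - T) (by linarith)]

theorem limsupNorm_le_smallGainBound (hic : C.IsInterconnection S)
    (hAG : AGSumEstimate S γmat γext) (hγ : ∀ i j, IsGainFun (γmat i j))
    (hγext : ∀ i, IsGainFun (γext i)) (hdiag : ∀ i, γmat i i = fun _ => 0) {Φ : ℝ → ℝ}
    (hΦ : IsGainFun Φ) (hΦsg : IsSmallGainBound γmat Φ) (hfc : C.ForwardComplete)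
    (hu : u ∈ inp.carrier) {B : ℝ} (hB : ∀ j, ∀ t ≥ (0:ℝ), ‖C.flow t x u j‖ ≤ B) (i : Fin n) :
    C.limsupNorm x u i ≤ Φ (∑ j, γext j (inp.normU u)) := by
  set c := ∑ j, γext j (inp.normU u)
  have hu₀ := inp.normU_nonneg u hu
  have hc : 0 ≤ c := Finset.sum_nonneg fun j _ => (hγext j).nonneg _ hu₀
  have hℓ₀ : ∀ j, 0 ≤ C.limsupNorm x u j := fun j => limsupNorm_nonneg (hB j)
  have hγc : ∀ j, γext j (inp.normU u) ≤ c := fun j =>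
    Finset.single_le_sum (f := fun k => γext k (inp.normU u))
      (fun k _ => (hγext k).nonneg _ hu₀) (Finset.mem_univ j)
  have hη : ∀ η > 0, C.limsupNorm x u i ≤ Φ (c + η) := fun η hη => by
    have hstep := fun j => hic.limsupNorm_le hAG hγ hγext hdiag hfc hu hB j (half_pos hη)
      (half_pos hη)
    have := hΦsg (fun j => C.limsupNorm x u j + η / 2) (fun j => η + γext j (inp.normU u))
      (fun j => by linarith [hℓ₀ j]) (fun j => by linarith [(hγext j).nonneg _ hu₀])
      (fun j => by linarith [hstep j])
      (c + η) (by linarith)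
      (fun j => by linarith [hγc j]) i
    linarith
  have hlim : Tendsto (fun η => Φ (c + η)) (𝓝[>] 0) (𝓝 (Φ c)) := by
    refine (hΦ.continuousOn c hc).tendsto.comp
      (tendsto_nhdsWithin_of_tendsto_nhds_of_eventually_within _ ?_ ?_)
    · simpa using ((continuous_const_add c).tendsto 0).mono_left nhdsWithin_le_nhds
    · filter_upwards [self_mem_nhdsWithin] with η hη
      exact add_nonneg hc (le_of_lt hη)
  exact ge_of_tendsto hlim (eventually_nhdsWithin_of_forall hη)

end IsInterconnection

end CoupledSystem

end Interconnection

/-- **Weak ISS small-gain theorem.** If each forward complete subsystem `Σᵢ`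
is weakly ISS with the same gain matrix `Γ = (γᵢⱼ)` for both the UGS and the AG estimates,
the interconnection `Σ` is a well-defined control system with the BIC property, and the gain
operator `Γ_⊕` satisfies the strong small-gain condition, then `Σ` is forward complete and
weakly ISS, i.e. UGS with the AG property. -/
theorem weak_iss_small_gain_theorem
    {n : ℕ} {X : Fin n → Type*} [∀ j, NormedAddCommGroup (X j)]
    {U : Type*} {inp : InputSpace U}
    (S : ∀ i, Subsystem X i inp) (C : CoupledSystem X inp)
    (σ : Fin n → ℝ → ℝ) (γmat : Fin n → Fin n → ℝ → ℝ) (γext : Fin n → ℝ → ℝ)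
    (hσ : ∀ i, IsClassKinf (σ i))
    (hγmat : ∀ i j, IsClassKZero (γmat i j))
    (hdiag : ∀ i, γmat i i = fun _ => 0)
    (hγext : ∀ i, IsClassKZero (γext i))
    (hUGSest : ∀ i : Fin n, ∀ x : X i, ∀ w, (∀ j, PCFun (w j)) → ∀ u ∈ inp.carrier,
      ∀ t ≥ (0:ℝ),
        ‖(S i).flow t x w u‖ ≤ σ i ‖x‖
          + (∑ j : {j : Fin n // j ≠ i}, γmat i j.1 (supNormOn (w j) (Set.Icc 0 t)))
          + γext i (inp.normU u))
    (hAGest : ∀ i : Fin n, ∀ x : X i, ∀ u ∈ inp.carrier, ∀ w, (∀ j, PCFun (w j)) →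
      ∀ ε > (0:ℝ), ∃ τ ≥ (0:ℝ), ∀ t ≥ τ,
        ‖(S i).flow t x w u‖ ≤ ε
          + (∑ j : {j : Fin n // j ≠ i}, γmat i j.1 (supNormOn (w j) (Set.Ici 0)))
          + γext i (inp.normU u))
    (hic : C.IsInterconnection S) (hBIC : C.BIC)
    (hsg : StrongSmallGainCond n (gainOpSum n γmat)) :
    C.ForwardComplete ∧ C.UGS ∧ C.AG := by
  obtain ⟨Φ, hΦ, hΦsg⟩ :=
    StrongSmallGainCond.exists_isSmallGainBound (fun i j => (hγmat i j).isGainFun) hsg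
  have hσ' := fun i => (hσ i).isGainFun
  have hγ' := fun i j => (hγmat i j).isGainFun
  have hγext' := fun i => (hγext i).isGainFun
  have hbound : ∀ x, ∀ u ∈ inp.carrier, ∀ T, 0 ≤ T → (∀ s ∈ Icc 0 T, (s, x, u) ∈ C.dom) →
      ∀ i, ‖C.flow T x u i‖ ≤ Φ (∑ j, σ j (fullNorm x) + ∑ j, γext j (inp.normU u)) :=
    fun x u hu T hT hdom =>
      hic.norm_flow_le_smallGainBound hUGSest hσ' hγ' hγext' hdiag hΦsg hu hT hdom
  have hσsum := IsGainFun.sum Finset.univ fun i _ => hσ' i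
  have hγsum := IsGainFun.sum Finset.univ fun i _ => hγext' i
  have hfull : ∀ x, ∀ u ∈ inp.carrier, ∀ T, 0 ≤ T → (∀ s ∈ Icc 0 T, (s, x, u) ∈ C.dom) →
      fullNorm (C.flow T x u) ≤ √n * Φ (∑ j, σ j (fullNorm x) + ∑ j, γext j (inp.normU u)) :=
    fun x u hu T hT hdom => fullNorm_le_sqrt_mul (hΦ.nonneg _ (add_nonneg
      (hσsum.nonneg _ (fullNorm_nonneg x)) (hγsum.nonneg _ (inp.normU_nonneg u hu))))
      (hbound x u hu T hT hdom)
  have hfc : C.ForwardComplete := hBIC.forwardComplete fun x u hu => ⟨_, hfull x u hu⟩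
  have hdom : ∀ x, ∀ u ∈ inp.carrier, ∀ T, ∀ s ∈ Icc 0 T, (s, x, u) ∈ C.dom :=
    fun x u hu _ s hs => hfc s hs.1 x u hu
  refine ⟨hfc, C.ugs_of_fullNorm_le hΦ hσsum hγsum (Real.sqrt_nonneg n) fun t x u hdom_t => ?_,
    C.ag_of_limsupNorm_le (hΦ.comp hγsum) fun x u hu =>
      ⟨⟨Φ (∑ j, σ j (fullNorm x) + ∑ j, γext j (inp.normU u)), fun j t ht => ?_⟩, fun j => ?_⟩⟩
  · obtain ⟨ht, hu⟩ := C.dom_sub _ hdom_t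
    exact hfull x u hu t ht (hdom x u hu t)
  · exact hbound x u hu t ht (hdom x u hu t) j
  · exact hic.limsupNorm_le_smallGainBound hAGest hγ' hγext' hdiag hΦ hΦsg hfc hu
      (fun j t ht => hbound x u hu t ht (hdom x u hu t) j) j
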